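/- arXiv:1810.05152 — 6 statements merged into one kernel-verified Lean document; each statement's English description precedes it below -/
import Mathlib

section
/- In any group, if σ_i := τ^{i-1} σ_1 τ^{-(i-1)} and σ_1 commutes with σ_k for all 3 ≤ k ≤ n−1, then σ_i commutes with σ_j for all 1 < i < j ≤ n with j − i ∉ {1, n−1}. -/
private lemma conj_comm_aux {G : Type*} [Group G] (t x y : G) (h : x * y = y * x) :
    (t * x * t⁻¹) * (t * y * t⁻¹) = (t * y * t⁻¹) * (t * x * t⁻¹) := by
  have : t * (x * y) * t⁻¹ = t * (y * x) * t⁻¹ := by rw [h]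
  group at this ⊢
  simpa [mul_assoc] using this

/-- In any group, if `σ_i := τ^{i-1} σ_1 τ^{-(i-1)}` and `σ_1` commutes with `σ_k`
for all `3 ≤ k ≤ n-1`, then `σ_i` commutes with `σ_j` for all `1 < i < j ≤ n`
with `j - i ∉ {1, n-1}`. Here `s (i+1) = τ^i σ1 τ^{-i}` encodes `σ_{i+1}`. -/
theorem far_commutation_propagates {G : Type*} [Group G] (n : ℕ) (σ1 τ : G) (s : ℕ → G)
    (hs : ∀ i : ℕ, s (i + 1) = τ ^ i * σ1 * (τ ^ i)⁻¹)
    (hcomm : ∀ k : ℕ, 3 ≤ k → k ≤ n - 1 → σ1 * s k = s k * σ1) :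
    ∀ i j : ℕ, 1 < i → i < j → j ≤ n → j - i ≠ 1 → j - i ≠ n - 1 →
      s i * s j = s j * s i := by
  intro i j hi hij hjn hd1 hd2
  obtain ⟨a, rfl⟩ : ∃ a, i = a + 1 := ⟨i - 1, by omega⟩
  obtain ⟨b, rfl⟩ : ∃ b, j = b + 1 := ⟨j - 1, by omega⟩
  have hk := hcomm (b - a + 1) (by omega) (by omega)
  rw [hs] at hk
  have hb : τ ^ b = τ ^ a * τ ^ (b - a) := by
    rw [← pow_add]; congr 1; omega
  rw [hs, hs, hb]
  have key := conj_comm_aux (τ ^ a) σ1 (τ ^ (b - a) * σ1 * (τ ^ (b - a))⁻¹) hk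
  calc τ ^ a * σ1 * (τ ^ a)⁻¹ * (τ ^ a * τ ^ (b - a) * σ1 * (τ ^ a * τ ^ (b - a))⁻¹)
      = (τ ^ a * σ1 * (τ ^ a)⁻¹) *
        (τ ^ a * (τ ^ (b - a) * σ1 * (τ ^ (b - a))⁻¹) * (τ ^ a)⁻¹) := by group
    _ = (τ ^ a * (τ ^ (b - a) * σ1 * (τ ^ (b - a))⁻¹) * (τ ^ a)⁻¹) *
        (τ ^ a * σ1 * (τ ^ a)⁻¹) := key
    _ = τ ^ a * τ ^ (b - a) * σ1 * (τ ^ a * τ ^ (b - a))⁻¹ * (τ ^ a * σ1 * (τ ^ a)⁻¹) := by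
        group
end

section
/- Let ρ : B_n → GL(V) be a finite-dimensional representation of the braid group and γ = σ_1⋯σ_{n-1}. If ρ(γ^{2n}) = c·Id for a nonzero scalar c, then setting ρ(τ) = c^{-1/(2n)}·ρ(γ) and ρ(σ_n) = ρ(γ)ρ(σ_{n-1})ρ(γ)^{-1} extends ρ to a representation of NB_n, i.e. the assigned matrices satisfy all defining relations (B1),(B2),(N1),(N2) of NB_n. -/
/-!
Write `γ = a 1 * ⋯ * a (n - 1)`. Moving a generator through `γ` by the braid and far-commutation
relations gives `γ a_i γ⁻¹ = a_{i+1}` for `1 ≤ i ≤ n - 2`, and a descending induction on the tails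
`a_s * ⋯ * a (n - 1)` gives `γ² a_{n-1} γ⁻² = a_1`. Hence, once `σ_n := γ a_{n-1} γ⁻¹` is adjoined,
conjugation by `γ` permutes the `n` generators cyclically. Every relation (B1), (B2) of `NB_n` is a
cyclic shift of a braid relation among `a 1, …, a (n - 1)`, so it holds; (N1) is the shift itself,
and (N2) is `(d • γ) ^ (2n) = c⁻¹ • c • 1`.
-/

section

variable {M : Type*}

/-- The index `i : Fin n` stands for `σ_{i+1}`; the last one, `σ_n`, is sent to `x`. -/
def cyclicExtension (n : ℕ) (a : ℕ → M) (x : M) (i : Fin n) : M :=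
  if (i : ℕ) + 1 = n then x else a ((i : ℕ) + 1)

section CyclicExtension

variable {n : ℕ} {a : ℕ → M} {x : M}

lemma cyclicExtension_of_lt {i : Fin n} (hi : (i : ℕ) + 1 < n) :
    cyclicExtension n a x i = a ((i : ℕ) + 1) :=
  if_neg hi.ne

lemma cyclicExtension_of_eq {i : Fin n} (hi : (i : ℕ) + 1 = n) : cyclicExtension n a x i = x :=
  if_pos hi

end CyclicExtension

lemma Fin.val_one_of_two_le {n : ℕ} [NeZero n] (hn : 2 ≤ n) : ((1 : Fin n) : ℕ) = 1 := by
  rw [Fin.val_one', Nat.mod_eq_of_lt hn]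

lemma Fin.induction_add_one {n : ℕ} [NeZero n] {P : Fin n → Prop} (zero : P 0)
    (succ : ∀ i, P i → P (i + 1)) (i : Fin n) : P i := by
  obtain ⟨m, rfl⟩ := Nat.exists_eq_succ_of_ne_zero (NeZero.ne n)
  induction i using Fin.induction with
  | zero => exact zero
  | succ i ih => rw [← Fin.coeSucc_eq_succ]; exact succ _ ih

variable [Monoid M]

def rangeProd (a : ℕ → M) (s m : ℕ) : M := ((List.range' s m).map a).prod

section RangeProd

variable (a : ℕ → M) (s m : ℕ)

@[simp] lemma rangeProd_zero : rangeProd a s 0 = 1 := rfl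

lemma rangeProd_succ : rangeProd a s (m + 1) = a s * rangeProd a (s + 1) m := by
  simp [rangeProd, List.range'_succ]

lemma rangeProd_add (k : ℕ) :
    rangeProd a s (m + k) = rangeProd a s m * rangeProd a (s + m) k := by
  simp [rangeProd, ← List.range'_append_1, List.map_append, List.prod_append]

lemma prod_map_range_add_one :
    ((List.range m).map (fun i => a (i + 1))).prod = rangeProd a 1 m := by
  simp only [rangeProd, List.range'_eq_map_range, List.map_map]
  congr 2 with i
  simp [add_comm]

variable {a s m} {x : M}

lemma Commute.rangeProd_right (h : ∀ j, s ≤ j → j < s + m → Commute x (a j)) :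
    Commute x (rangeProd a s m) :=
  Commute.list_prod_right _ _ <| by
    simp only [List.mem_map, List.mem_range'_1]
    rintro _ ⟨j, ⟨h1, h2⟩, rfl⟩
    exact h j h1 h2

end RangeProd

structure BraidRelations (a : ℕ → M) (n : ℕ) : Prop where
  braid : ∀ i, 1 ≤ i → i + 2 ≤ n → a i * a (i + 1) * a i = a (i + 1) * a i * a (i + 1)
  comm : ∀ i j, 1 ≤ i → j ≤ n - 1 → i + 1 < j → Commute (a i) (a j)

namespace BraidRelations

variable {a : ℕ → M} {n : ℕ}

theorem semiconjBy_rangeProd (h : BraidRelations a n) {s m i : ℕ} (hs : 1 ≤ s) (hsi : s ≤ i)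
    (him : i + 2 ≤ s + m) (hmn : s + m ≤ n) :
    SemiconjBy (rangeProd a s m) (a i) (a (i + 1)) := by
  obtain ⟨k, rfl⟩ : ∃ k, i = s + k := ⟨i - s, by omega⟩
  obtain ⟨l, rfl⟩ : ∃ l, m = k + (2 + l) := ⟨m - k - 2, by omega⟩
  rw [rangeProd_add, rangeProd_add]
  have hhead : Commute (rangeProd a s k) (a (s + k + 1)) :=
    (Commute.rangeProd_right fun j hj hjk =>
      (h.comm j _ (by omega) (by omega) (by omega)).symm).symm
  have hmid : SemiconjBy (rangeProd a (s + k) 2) (a (s + k)) (a (s + k + 1)) := by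
    simp only [SemiconjBy, rangeProd_succ, rangeProd_zero, mul_one, ← mul_assoc]
    exact h.braid _ (by omega) (by omega)
  have htail : Commute (rangeProd a (s + k + 2) l) (a (s + k)) :=
    (Commute.rangeProd_right fun j hj hjl => h.comm _ j (by omega) (by omega) (by omega)).symm
  exact SemiconjBy.mul_left hhead (hmid.mul_left htail)

/-- With `E = a (s + 1) * ⋯ * a (s + m)`, this is `(a s * E)² * a (s + m) = a s * (a s * E)²` with
the leading `a s` cancelled: only this cancelled form passes from `s + 1` to `s`. -/
theorem rangeProd_mul_mul_rangeProd_mul_last (h : BraidRelations a n) {m s : ℕ} (hs : 1 ≤ s)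
    (hmn : s + m < n) :
    rangeProd a (s + 1) m * a s * rangeProd a (s + 1) m * a (s + m) =
      a s * rangeProd a (s + 1) m * a s * rangeProd a (s + 1) m := by
  induction m generalizing s with
  | zero => simp
  | succ m ih =>
    have ih := ih (s := s + 1) (by omega) (by omega)
    set F := rangeProd a (s + 1 + 1) m
    have hF : Commute F (a s) :=
      (Commute.rangeProd_right fun j hj hjm => h.comm s j hs (by omega) (by omega)).symm
    have hb := h.braid s hs (by omega)
    rw [rangeProd_succ, show s + (m + 1) = s + 1 + m by omega]
    calc a (s + 1) * F * a s * (a (s + 1) * F) * a (s + 1 + m)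
        = a (s + 1) * a s * (F * a (s + 1) * F * a (s + 1 + m)) := by
          rw [mul_assoc _ F, hF.eq]; simp only [mul_assoc]
      _ = a (s + 1) * a s * a (s + 1) * (F * a (s + 1) * F) := by rw [ih]; simp only [mul_assoc]
      _ = a s * a (s + 1) * (a s * F) * (a (s + 1) * F) := by rw [← hb]; simp only [mul_assoc]
      _ = a s * (a (s + 1) * F) * a s * (a (s + 1) * F) := by rw [← hF.eq]; simp only [mul_assoc]

theorem semiconjBy_rangeProd_sq (h : BraidRelations a n) {m s : ℕ} (hs : 1 ≤ s)
    (hmn : s + m < n) : SemiconjBy (rangeProd a s (m + 1) ^ 2) (a (s + m)) (a s) := by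
  have := h.rangeProd_mul_mul_rangeProd_mul_last hs hmn
  simp only [SemiconjBy, rangeProd_succ, sq, mul_assoc] at this ⊢
  rw [this]

end BraidRelations

lemma SemiconjBy.eq_of_isRightRegular {g x y y' : M} (hg : IsRightRegular g)
    (h : SemiconjBy g x y) (h' : SemiconjBy g x y') : y = y' :=
  hg (h.eq.symm.trans h'.eq)

section CyclicFamily

variable {n : ℕ} [NeZero n] {g : M} {b : Fin n → M}

theorem braid_of_semiconjBy (hg : IsRightRegular g) (hb : ∀ i, SemiconjBy g (b i) (b (i + 1)))
    (h0 : b 0 * b 1 * b 0 = b 1 * b 0 * b 1) (i : Fin n) :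
    b i * b (i + 1) * b i = b (i + 1) * b i * b (i + 1) := by
  induction i using Fin.induction_add_one with
  | zero => simpa using h0
  | succ i ih =>
    refine SemiconjBy.eq_of_isRightRegular hg
      (((hb i).mul_right (hb (i + 1))).mul_right (hb i)) ?_
    rw [ih]
    exact ((hb (i + 1)).mul_right (hb i)).mul_right (hb (i + 1))

theorem commute_add_of_semiconjBy (hg : IsRightRegular g)
    (hb : ∀ i, SemiconjBy g (b i) (b (i + 1))) {k : Fin n} (h0 : Commute (b 0) (b k))
    (i : Fin n) : Commute (b i) (b (i + k)) := by
  induction i using Fin.induction_add_one with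
  | zero => simpa using h0
  | succ i ih =>
    show b (i + 1) * b (i + 1 + k) = b (i + 1 + k) * b (i + 1)
    rw [← add_right_comm]
    refine SemiconjBy.eq_of_isRightRegular hg ((hb i).mul_right (hb (i + k))) ?_
    rw [ih.eq]
    exact (hb (i + k)).mul_right (hb i)

end CyclicFamily

section CyclicShift

variable {n : ℕ} [NeZero n] {a : ℕ → M} {x : M}

theorem semiconjBy_cyclicExtension (hn : 2 ≤ n) {g : M}
    (hmid : ∀ i, 1 ≤ i → i + 2 ≤ n → SemiconjBy g (a i) (a (i + 1)))
    (hlast : SemiconjBy g (a (n - 1)) x) (hwrap : SemiconjBy g x (a 1)) (i : Fin n) :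
    SemiconjBy g (cyclicExtension n a x i) (cyclicExtension n a x (i + 1)) := by
  rcases Nat.lt_or_ge ((i : ℕ) + 1) n with hi | hi
  · rw [cyclicExtension_of_lt hi]
    have hsucc : ((i + 1 : Fin n) : ℕ) = i + 1 := Fin.val_add_one_of_lt' hi
    by_cases hi2 : (i : ℕ) + 2 = n
    · rw [cyclicExtension_of_eq (by omega), show (i : ℕ) + 1 = n - 1 by omega]
      exact hlast
    · rw [cyclicExtension_of_lt (by omega), hsucc]
      exact hmid _ le_add_self (by omega)
  · have hlast' : (i : ℕ) + 1 = n := by omega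
    have hzero : i + 1 = 0 := Fin.ext <| by
      rw [Fin.val_add, Fin.val_one_of_two_le hn, hlast', Nat.mod_self, Fin.val_zero]
    rw [cyclicExtension_of_eq hlast', hzero, cyclicExtension_of_lt (by simp; omega)]
    simpa using hwrap

theorem BraidRelations.semiconjBy_cyclicExtension_conj (h : BraidRelations a n) (hn : 2 ≤ n)
    {γ γ' : M} (hγ : γ = rangeProd a 1 (n - 1)) (hγγ' : γ * γ' = 1) (hγ'γ : γ' * γ = 1)
    (i : Fin n) :
    SemiconjBy γ (cyclicExtension n a (γ * a (n - 1) * γ') i)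
      (cyclicExtension n a (γ * a (n - 1) * γ') (i + 1)) := by
  have hsq : SemiconjBy (γ ^ 2) (a (n - 1)) (a 1) := by
    have := h.semiconjBy_rangeProd_sq (m := n - 2) le_rfl (by omega)
    rwa [show n - 2 + 1 = n - 1 by omega, show 1 + (n - 2) = n - 1 by omega, ← hγ] at this
  refine semiconjBy_cyclicExtension hn
    (fun i hi hin => hγ ▸ h.semiconjBy_rangeProd le_rfl hi (by omega) (by omega)) ?_ ?_ i
  · rw [SemiconjBy, mul_assoc _ γ', hγ'γ, mul_one]
  · rw [SemiconjBy, ← mul_assoc, ← mul_assoc, ← sq, hsq.eq, mul_assoc, sq, mul_assoc, hγγ',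
      mul_one]

theorem BraidRelations.braid_cyclicExtension_zero (h : BraidRelations a n) (hn : 3 ≤ n) :
    cyclicExtension n a x 0 * cyclicExtension n a x 1 * cyclicExtension n a x 0 =
      cyclicExtension n a x 1 * cyclicExtension n a x 0 * cyclicExtension n a x 1 := by
  have h1 := Fin.val_one_of_two_le (n := n) (by omega)
  rw [cyclicExtension_of_lt (by simp; omega), cyclicExtension_of_lt (by omega), h1]
  exact h.braid 1 le_rfl hn

theorem BraidRelations.commute_cyclicExtension_zero (h : BraidRelations a n) (hn : 3 ≤ n)
    {k : Fin n} (hk : k ≠ 1) (hk' : -k ≠ 1) :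
    Commute (cyclicExtension n a x 0) (cyclicExtension n a x k) := by
  have h1 := Fin.val_one_of_two_le (n := n) (by omega)
  have hk1 : (k : ℕ) ≠ 1 := fun hk1 => hk (Fin.ext (hk1.trans h1.symm))
  have hklast : (k : ℕ) + 1 ≠ n := fun hklast => hk' <| neg_eq_of_add_eq_zero_right <|
    Fin.ext (by rw [Fin.val_add, h1, hklast, Nat.mod_self, Fin.val_zero])
  rw [cyclicExtension_of_lt (by simp; omega), cyclicExtension_of_lt (by omega)]
  rcases Nat.eq_zero_or_pos k with hk0 | hk0
  · simp [hk0]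
  · exact h.comm 1 _ le_rfl (by omega) (by omega)

end CyclicShift

end

/-- Lemma 2.2 of the paper: if `ρ : B_n → GL(V)` is a representation
(given here by the images `a 1, …, a (n-1)` of the braid generators, satisfying
the braid relations) with `ρ(γ)^{2n} = c·Id` for a nonzero scalar `c`, where
`γ = σ_1⋯σ_{n-1}`, then setting `ρ(τ) = c^{-1/(2n)}·ρ(γ)` (where `d` is a chosen
`2n`-th root of `c⁻¹`) and `ρ(σ_n) = ρ(γ)ρ(σ_{n-1})ρ(γ)⁻¹` yields operators
satisfying all the defining relations (B1), (B2), (N1), (N2) of `NB_n`.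
Here `b i` encodes `ρ(σ_{i+1})` for `i : Fin n` (indices mod `n`). -/
theorem extension_of_braid_rep (n : ℕ) (hn : 3 ≤ n) [NeZero n]
    {V : Type*} [AddCommGroup V] [Module ℂ V]
    (a : ℕ → Module.End ℂ V)
    (hbraid : ∀ i : ℕ, 1 ≤ i → i + 2 ≤ n →
      a i * a (i + 1) * a i = a (i + 1) * a i * a (i + 1))
    (hcomm : ∀ i j : ℕ, 1 ≤ i → j ≤ n - 1 → i + 1 < j → a i * a j = a j * a i)
    (γ γ' : Module.End ℂ V)
    (hγ : γ = ((List.range (n - 1)).map (fun i => a (i + 1))).prod)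
    (hγγ' : γ * γ' = 1) (hγ'γ : γ' * γ = 1)
    (c d : ℂ) (hc : c ≠ 0)
    (hγc : γ ^ (2 * n) = c • (1 : Module.End ℂ V))
    (hd : d ^ (2 * n) = c⁻¹) :
    let τ : Module.End ℂ V := d • γ
    let b : Fin n → Module.End ℂ V :=
      fun i => if (i : ℕ) + 1 = n then γ * a (n - 1) * γ' else a ((i : ℕ) + 1)
    (∀ i : Fin n, b i * b (i + 1) * b i = b (i + 1) * b i * b (i + 1)) ∧
    (∀ i j : Fin n, i - j ≠ 1 → j - i ≠ 1 → b i * b j = b j * b i) ∧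
    (∀ i : Fin n, τ * b i = b (i + 1) * τ) ∧
    τ ^ (2 * n) = 1 := by
  intro τ b
  have hrel : BraidRelations a n := ⟨hbraid, hcomm⟩
  have hshift : ∀ i, SemiconjBy γ (b i) (b (i + 1)) :=
    hrel.semiconjBy_cyclicExtension_conj (by omega) (hγ.trans (prod_map_range_add_one a _))
      hγγ' hγ'γ
  have hreg : IsRightRegular γ := isRightRegular_of_mul_eq_one hγγ'
  refine ⟨braid_of_semiconjBy hreg hshift (hrel.braid_cyclicExtension_zero hn),
    fun i j hij hji => ?_, fun i => (hshift i).smul_left d, ?_⟩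
  · have := commute_add_of_semiconjBy hreg hshift
      (hrel.commute_cyclicExtension_zero hn hji (by rwa [neg_sub])) i
    rwa [add_sub_cancel] at this
  · rw [smul_pow, hd, hγc, smul_smul, inv_mul_cancel₀ hc, one_smul]
end

section
/- For n ≥ 3, given a braided vector space (R,V), define ρ(σ_i) = I^{⊗(i-1)} ⊗ R ⊗ I^{⊗(n-i-1)} on V^{⊗n} for 1 ≤ i ≤ n−1, ρ(τ) = X the cyclic permutation operator sending v_1⊗⋯⊗v_n to v_n⊗v_1⊗⋯⊗v_{n-1}, and ρ(σ_n) = ρ(τ)ρ(σ_{n-1})ρ(τ)^{-1}. Then these operators satisfy all defining relations of NB_n, so ρ is a representation of NB_n on V^{⊗n}. -/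
/-!
Conjugation by the cyclic shift `X` moves every tensor factor one position forward, so every
`ρ(σ_i)` is `R` acting on the cyclically adjacent factors `i, i+1` (for `i = n`: factors `n, 1`);
this also gives (N1), and `X^n = 1` gives (N2). Splitting `V^{⊗n}` as the tensor product of the
factors at some chosen positions and of the remaining ones, `R` on a pair of chosen positions
becomes `M ⊗ 1` and `R` on a pair of remaining positions `1 ⊗ N`. For two disjoint pairs this
gives (B2); for three distinct positions it turns the Yang–Baxter equation on `V^{⊗3}` into (B1).
-/

open Matrix

open Fin.NatCast in
/-- The operator `I^{⊗i} ⊗ r ⊗ I^{⊗(n-j-1)}` on `V^{⊗n}` (in matrix form with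
respect to a basis `B` of `V`): it acts by `r` on the tensor factors in
positions `i` and `j` (0-based, taken mod `n`) and by the identity elsewhere. -/
def embM {K : Type*} [Field K] {B : Type*} [Fintype B] [DecidableEq B]
    (n : ℕ) [NeZero n] (r : Matrix (B × B) (B × B) K) (i j : ℕ) :
    Matrix (Fin n → B) (Fin n → B) K :=
  Matrix.of fun x y =>
    if ∀ k : Fin n, k ≠ (i : Fin n) → k ≠ (j : Fin n) → x k = y k then
      r (x (i : Fin n), x (j : Fin n)) (y (i : Fin n), y (j : Fin n))
    else 0

/-- The cyclic permutation operator on `V^{⊗n}` sending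
`v_1 ⊗ ⋯ ⊗ v_n` to `v_n ⊗ v_1 ⊗ ⋯ ⊗ v_{n-1}` (matrix form). -/
def cycM (K : Type*) [Field K] (B : Type*) [Fintype B] [DecidableEq B]
    (n : ℕ) [NeZero n] : Matrix (Fin n → B) (Fin n → B) K :=
  Matrix.of fun x y => if ∀ k : Fin n, x k = y (k - 1) then 1 else 0

open scoped Kronecker

section FinArith

open Fin.NatCast

variable {n : ℕ} [NeZero n]

theorem Fin.ne_add_natCast (i : Fin n) {m : ℕ} (h0 : 0 < m) (hm : m < n) : i ≠ i + m := by
  rw [ne_eq, left_eq_add, Fin.natCast_eq_zero]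
  exact Nat.not_dvd_of_pos_of_lt h0 hm

theorem Fin.ne_add_one (hn : 2 ≤ n) (i : Fin n) : i ≠ i + 1 := by
  simpa using i.ne_add_natCast Nat.one_pos hn

theorem Fin.ne_add_one_add_one (hn : 3 ≤ n) (i : Fin n) : i ≠ i + 1 + 1 := by
  simpa [add_assoc, one_add_one_eq_two] using i.ne_add_natCast Nat.two_pos hn

end FinArith

section

variable {K : Type*} [Field K] {B : Type*}

section Split

variable {ι κ : Type*} [Fintype ι] [DecidableEq κ]

noncomputable def splitAlong (e : ι ↪ κ) :
    (κ → B) ≃ (ι → B) × ({k // k ∉ Set.range e} → B) :=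
  (Equiv.piEquivPiSubtypeProd (· ∈ Set.range e) fun _ => B).trans
    ((Equiv.arrowCongr (Equiv.ofInjective e e.injective).symm (Equiv.refl B)).prodCongr
      (Equiv.refl _))

theorem splitAlong_apply (e : ι ↪ κ) (x : κ → B) :
    splitAlong e x = (x ∘ e, fun k => x k.1) := by
  ext <;> simp [splitAlong]

noncomputable def tensorAlong (e : ι ↪ κ) (M : Matrix (ι → B) (ι → B) K)
    (N : Matrix ({k // k ∉ Set.range e} → B) ({k // k ∉ Set.range e} → B) K) :
    Matrix (κ → B) (κ → B) K :=
  reindex (splitAlong e).symm (splitAlong e).symm (M ⊗ₖ N)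

theorem tensorAlong_apply (e : ι ↪ κ) (M : Matrix (ι → B) (ι → B) K)
    (N : Matrix ({k // k ∉ Set.range e} → B) ({k // k ∉ Set.range e} → B) K)
    (x y : κ → B) :
    tensorAlong e M N x y = M (x ∘ e) (y ∘ e) * N (fun k => x k.1) (fun k => y k.1) := by
  simp [tensorAlong, splitAlong_apply]

theorem tensorAlong_mul_tensorAlong [Fintype B] [DecidableEq ι] [Fintype κ] (e : ι ↪ κ)
    (M M' : Matrix (ι → B) (ι → B) K)
    (N N' : Matrix ({k // k ∉ Set.range e} → B) ({k // k ∉ Set.range e} → B) K) :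
    tensorAlong e M N * tensorAlong e M' N' = tensorAlong e (M * M') (N * N') := by
  simp only [tensorAlong, reindex_apply, Equiv.symm_symm, submatrix_mul_equiv, mul_kronecker_mul]

end Split

section OnPair

variable [DecidableEq B] {ι κ : Type*} [Fintype ι] [Fintype κ] [DecidableEq κ]

def onPair [DecidableEq ι] (r : Matrix (B × B) (B × B) K) (i j : ι) :
    Matrix (ι → B) (ι → B) K :=
  Matrix.of fun x y =>
    if ∀ k, k ≠ i → k ≠ j → x k = y k then r (x i, x j) (y i, y j) else 0

open Fin.NatCast in
theorem embM_eq_onPair [Fintype B] (n : ℕ) [NeZero n] (r : Matrix (B × B) (B × B) K)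
    (i j : ℕ) : embM n r i j = onPair r (i : Fin n) (j : Fin n) := by
  ext x y
  simp only [embM, onPair, of_apply]
  congr

theorem onPair_submatrix_comp [DecidableEq ι] (r : Matrix (B × B) (B × B) K) (π : ι ≃ κ)
    (i j : ι) : (onPair r i j).submatrix (· ∘ π) (· ∘ π) = onPair r (π i) (π j) := by
  ext x y
  simp only [onPair, submatrix_apply, of_apply]
  refine if_congr ⟨fun h k hi hj => ?_, fun h k hi hj => h _ (by simpa) (by simpa)⟩ rfl rfl
  simpa using h (π.symm k) (by rintro rfl; simp at hi) (by rintro rfl; simp at hj)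

theorem onPair_map_eq_tensorAlong [DecidableEq ι] (r : Matrix (B × B) (B × B) K) (e : ι ↪ κ)
    (p q : ι) : onPair r (e p) (e q) = tensorAlong e (onPair r p q) 1 := by
  ext x y
  have hsplit : (∀ k, k ≠ e p → k ≠ e q → x k = y k) ↔
      (∀ m, m ≠ p → m ≠ q → x (e m) = y (e m)) ∧
        (fun k : {k // k ∉ Set.range e} => x k.1) = fun k => y k.1 := by
    refine ⟨fun h => ⟨fun m hp hq => h _ (by simpa) (by simpa), funext fun k => h _ ?_ ?_⟩,
      fun ⟨h, h'⟩ k hp hq => ?_⟩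
    · exact fun hk => k.2 ⟨p, hk.symm⟩
    · exact fun hk => k.2 ⟨q, hk.symm⟩
    · by_cases hk : k ∈ Set.range e
      · obtain ⟨m, rfl⟩ := hk
        exact h m (by rintro rfl; exact hp rfl) (by rintro rfl; exact hq rfl)
      · exact congrFun h' ⟨k, hk⟩
  simp only [tensorAlong_apply, onPair, of_apply, one_apply, Function.comp_apply, hsplit, ite_and]
  split_ifs <;> simp

theorem onPair_eq_tensorAlong_of_notMem (r : Matrix (B × B) (B × B) K) (e : ι ↪ κ) {k l : κ}
    (hk : k ∉ Set.range e) (hl : l ∉ Set.range e) :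
    onPair r k l = tensorAlong e 1 (onPair r ⟨k, hk⟩ ⟨l, hl⟩) := by
  ext x y
  have hsplit : (∀ c, c ≠ k → c ≠ l → x c = y c) ↔ x ∘ e = y ∘ e ∧
      ∀ c : {c // c ∉ Set.range e}, c ≠ ⟨k, hk⟩ → c ≠ ⟨l, hl⟩ → x c = y c := by
    refine ⟨fun h => ⟨funext fun m => h _ ?_ ?_, fun c hck hcl => h _ ?_ ?_⟩,
      fun ⟨h, h'⟩ c hck hcl => ?_⟩
    · exact fun hm => hk ⟨m, hm⟩
    · exact fun hm => hl ⟨m, hm⟩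
    · exact fun hc => hck (Subtype.ext hc)
    · exact fun hc => hcl (Subtype.ext hc)
    · by_cases hc : c ∈ Set.range e
      · obtain ⟨m, rfl⟩ := hc
        exact congrFun h m
      · exact h' ⟨c, hc⟩ (fun h => hck (congrArg Subtype.val h))
          (fun h => hcl (congrArg Subtype.val h))
  simp only [tensorAlong_apply, onPair, of_apply, one_apply, hsplit, ite_and]
  split_ifs <;> simp

variable [Fintype B]

theorem onPair_commute (r : Matrix (B × B) (B × B) K) {i j k l : κ}
    (hik : i ≠ k) (hil : i ≠ l) (hjk : j ≠ k) (hjl : j ≠ l) :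
    Commute (onPair r i j) (onPair r k l) := by
  let e := Function.Embedding.subtype (· ∈ ({i, j} : Finset κ))
  have hk : k ∉ Set.range e := by simp [e, Ne.symm hik, Ne.symm hjk]
  have hl : l ∉ Set.range e := by simp [e, Ne.symm hil, Ne.symm hjl]
  have hij : onPair r i j = tensorAlong e (onPair r ⟨i, by simp⟩ ⟨j, by simp⟩) 1 :=
    onPair_map_eq_tensorAlong r e ⟨i, by simp⟩ ⟨j, by simp⟩
  rw [hij, onPair_eq_tensorAlong_of_notMem r e hk hl, Commute, SemiconjBy,
    tensorAlong_mul_tensorAlong, tensorAlong_mul_tensorAlong, one_mul, mul_one, one_mul, mul_one]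

def IsYangBaxter (r : Matrix (B × B) (B × B) K) : Prop :=
  onPair r (0 : Fin 3) 1 * onPair r (1 : Fin 3) 2 * onPair r (0 : Fin 3) 1 =
    onPair r (1 : Fin 3) 2 * onPair r (0 : Fin 3) 1 * onPair r (1 : Fin 3) 2

theorem IsYangBaxter.onPair_braid {r : Matrix (B × B) (B × B) K} (hr : IsYangBaxter r)
    {a b c : κ} (hab : a ≠ b) (hac : a ≠ c) (hbc : b ≠ c) :
    onPair r a b * onPair r b c * onPair r a b = onPair r b c * onPair r a b * onPair r b c := by
  let e : Fin 3 ↪ κ := ⟨![a, b, c], by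
    intro u v h; fin_cases u <;> fin_cases v <;> simp_all [eq_comm]⟩
  have hab' : onPair r a b = tensorAlong e (onPair r 0 1) 1 := onPair_map_eq_tensorAlong r e 0 1
  have hbc' : onPair r b c = tensorAlong e (onPair r 1 2) 1 := onPair_map_eq_tensorAlong r e 1 2
  unfold IsYangBaxter at hr
  simp only [hab', hbc', tensorAlong_mul_tensorAlong, hr]

end OnPair

section Rotation

def precompPerm {ι : Type*} (π : Equiv.Perm ι) : Equiv.Perm (ι → B) :=
  π.symm.arrowCongr (Equiv.refl B)

theorem precompPerm_apply {ι : Type*} (π : Equiv.Perm ι) (x : ι → B) :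
    precompPerm π x = x ∘ π := rfl

open Fin.NatCast in
theorem precompPerm_addRight_pow_apply {n : ℕ} [NeZero n] (k : ℕ) (x : Fin n → B) :
    (precompPerm (Equiv.addRight (1 : Fin n)) ^ k) x = fun m => x (m + k) := by
  induction k with
  | zero => simp
  | succ k ih =>
    rw [pow_succ', Equiv.Perm.mul_apply, ih]
    ext m
    simp only [precompPerm_apply, Function.comp_apply, Equiv.coe_addRight]
    rw [Nat.cast_succ, add_assoc, add_comm 1]

variable [Fintype B] [DecidableEq B]

theorem permMatrix_precompPerm_mul_onPair {ι : Type*} [Fintype ι] [DecidableEq ι]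
    (r : Matrix (B × B) (B × B) K) (π : Equiv.Perm ι) (i j : ι) :
    (precompPerm π).permMatrix K * onPair r i j =
      onPair r (π i) (π j) * (precompPerm π).permMatrix K := by
  rw [PEquiv.toMatrix_toPEquiv_mul, PEquiv.mul_toMatrix_toPEquiv,
    ← onPair_submatrix_comp, submatrix_submatrix]
  rw [show (fun x : ι → B => x ∘ π) = precompPerm π from rfl, Equiv.self_comp_symm]
  rfl

variable {n : ℕ} [NeZero n]

theorem cycM_eq_permMatrix :
    cycM K B n = (precompPerm (B := B) (Equiv.addRight (1 : Fin n))).permMatrix K := by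
  ext x y
  simp only [cycM, of_apply, PEquiv.toMatrix_apply, Equiv.toPEquiv_apply, Option.mem_def,
    Option.some.injEq, precompPerm_apply, funext_iff, Function.comp_apply, Equiv.coe_addRight]
  refine if_congr ⟨fun h k => ?_, fun h k => ?_⟩ rfl rfl
  · simpa using h (k + 1)
  · simpa using h (k - 1)

theorem cycM_pow_self : cycM K B n ^ n = 1 := by
  set σ := precompPerm (B := B) (Equiv.addRight (1 : Fin n))
  have hσ : σ ^ n = 1 := by
    ext x m
    simp [σ, precompPerm_addRight_pow_apply]
  have hmatrix : σ.permMatrix K = permMatrixHom (R := K) σ⁻¹ := by simp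
  rw [cycM_eq_permMatrix, hmatrix, ← map_pow, inv_pow, hσ, inv_one, map_one]

theorem isUnit_det_cycM : IsUnit (cycM K B n).det :=
  IsUnit.of_pow_eq_one (by rw [← det_pow, cycM_pow_self, det_one]) (NeZero.ne n)

end Rotation

section Necklace

variable [Fintype B] [DecidableEq B]

theorem isYangBaxter_iff_embM (r : Matrix (B × B) (B × B) K) :
    IsYangBaxter r ↔ embM 3 r 0 1 * embM 3 r 1 2 * embM 3 r 0 1 =
      embM 3 r 1 2 * embM 3 r 0 1 * embM 3 r 1 2 := by
  simp only [IsYangBaxter, embM_eq_onPair]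
  rfl

variable {n : ℕ} [NeZero n]

theorem cycM_mul_onPair (r : Matrix (B × B) (B × B) K) (i j : Fin n) :
    cycM K B n * onPair r i j = onPair r (i + 1) (j + 1) * cycM K B n := by
  rw [cycM_eq_permMatrix]
  exact permMatrix_precompPerm_mul_onPair r _ i j

open Fin.NatCast

theorem embM_val_val_add_one (r : Matrix (B × B) (B × B) K) (i : Fin n) :
    embM n r i ((i : ℕ) + 1) = onPair r i (i + 1) := by
  rw [embM_eq_onPair, Nat.cast_succ, Fin.cast_val_eq_self]

theorem cycM_mul_embM_mul_inv (r : Matrix (B × B) (B × B) K) (hn : 2 ≤ n) (i : Fin n)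
    (hi : (i : ℕ) + 1 = n) :
    cycM K B n * embM n r (n - 2) (n - 1) * (cycM K B n)⁻¹ = onPair r i (i + 1) := by
  have hpred : ((n - 1 : ℕ) : Fin n) = i := by
    rw [← Fin.cast_val_eq_self i, show n - 1 = i by omega]
  have hpred₂ : ((n - 2 : ℕ) : Fin n) + 1 = i := by
    rw [← Nat.cast_add_one, show n - 2 + 1 = n - 1 by omega, hpred]
  rw [embM_eq_onPair, cycM_mul_onPair, mul_nonsing_inv_cancel_right _ _ isUnit_det_cycM,
    hpred₂, hpred]

end Necklace

end

theorem necklace_rep_from_BVS_general {K : Type*} [Field K] {B : Type*} [Fintype B]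
    [DecidableEq B] (n : ℕ) (hn : 3 ≤ n) [NeZero n]
    (r : Matrix (B × B) (B × B) K)
    (hyb : embM 3 r 0 1 * embM 3 r 1 2 * embM 3 r 0 1 =
           embM 3 r 1 2 * embM 3 r 0 1 * embM 3 r 1 2) :
    let X := cycM K B n
    let s : Fin n → Matrix (Fin n → B) (Fin n → B) K := fun i =>
      if (i : ℕ) + 1 = n then X * embM n r (n - 2) (n - 1) * X⁻¹
      else embM n r (i : ℕ) ((i : ℕ) + 1)
    (∀ i : Fin n, s i * s (i + 1) * s i = s (i + 1) * s i * s (i + 1)) ∧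
    (∀ i j : Fin n, i - j ≠ 1 → j - i ≠ 1 → s i * s j = s j * s i) ∧
    (∀ i : Fin n, X * s i = s (i + 1) * X) ∧
    X ^ (2 * n) = 1 := by
  intro X s
  have hs (i : Fin n) : s i = onPair r i (i + 1) := by
    dsimp only [s]
    split_ifs with hi
    · exact cycM_mul_embM_mul_inv r (by omega) i hi
    · exact embM_val_val_add_one r i
  have hsucc (i : Fin n) : i ≠ i + 1 := i.ne_add_one (by omega)
  refine ⟨fun i => ?_, fun i j hij hji => ?_, fun i => ?_, ?_⟩
  · simp only [hs]
    exact ((isYangBaxter_iff_embM r).2 hyb).onPair_braid (hsucc i) (i.ne_add_one_add_one hn)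
      (hsucc (i + 1))
  · obtain rfl | hne := eq_or_ne i j
    · rfl
    simp only [hs]
    refine (onPair_commute r hne ?_ ?_ (fun h => hne (add_right_cancel h))).eq
    · rintro rfl; simp at hij
    · rintro rfl; simp at hji
  · simp only [hs]
    exact cycM_mul_onPair r i (i + 1)
  · rw [mul_comm, pow_mul, cycM_pow_self, one_pow]

/-- For `n ≥ 3` and a braided vector space `(R, V)` (i.e. an invertible `r`
satisfying the Yang–Baxter equation on `V^{⊗3}`), the operators
`ρ(σ_i) = I^{⊗(i-1)} ⊗ R ⊗ I^{⊗(n-i-1)}` for `1 ≤ i ≤ n-1`, `ρ(τ) = X` the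
cyclic shift, and `ρ(σ_n) = ρ(τ)ρ(σ_{n-1})ρ(τ)⁻¹` satisfy all defining
relations (B1), (B2), (N1), (N2) of `NB_n`. Here `s i` encodes `ρ(σ_{i+1})`
for `i : Fin n`. -/
theorem necklace_rep_from_BVS {K : Type*} [Field K] {B : Type*} [Fintype B]
    [DecidableEq B] (n : ℕ) (hn : 3 ≤ n) [NeZero n]
    (r : Matrix (B × B) (B × B) K) (hr : IsUnit r)
    (hyb : embM 3 r 0 1 * embM 3 r 1 2 * embM 3 r 0 1 =
           embM 3 r 1 2 * embM 3 r 0 1 * embM 3 r 1 2) :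
    let X := cycM K B n
    let s : Fin n → Matrix (Fin n → B) (Fin n → B) K := fun i =>
      if (i : ℕ) + 1 = n then X * embM n r (n - 2) (n - 1) * X⁻¹
      else embM n r (i : ℕ) ((i : ℕ) + 1)
    (∀ i : Fin n, s i * s (i + 1) * s i = s (i + 1) * s i * s (i + 1)) ∧
    (∀ i j : Fin n, i - j ≠ 1 → j - i ≠ 1 → s i * s j = s j * s i) ∧
    (∀ i : Fin n, X * s i = s (i + 1) * X) ∧
    X ^ (2 * n) = 1 :=
  necklace_rep_from_BVS_general n hn r hyb
end

section
/- In the algebra ES(m,n-1) generated by u_1,…,u_{n-1} with relations u_i^m = 1, u_iu_{i+1} = q^2 u_{i+1}u_i, u_iu_j = u_ju_i for |i−j|>1, the element R_i = Σ_{j=0}^{m-1} q^{j^2} u_i^j satisfies R_i u_{i+1} = q u_i^{-1} u_{i+1} R_i and R_i u_{i-1} = q^{-1} u_{i-1} u_i R_i. -/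
/-- In the algebra `ES(m,n-1)` (here: any ℂ-algebra containing elements
`a = u_{i-1}`, `b = u_i`, `c = u_{i+1}` with the defining relations
`a^m = b^m = c^m = 1`, `b c = q² c b`, `a b = q² b a`), the element
`R_i = Σ_{j=0}^{m-1} q^{j²} u_i^j` satisfies
`R_i u_{i+1} = q u_i⁻¹ u_{i+1} R_i` and `R_i u_{i-1} = q⁻¹ u_{i-1} u_i R_i`
(note `u_i⁻¹ = u_i^{m-1}`). -/
theorem gaussian_Ri_conjugation (m : ℕ) (hm : 2 ≤ m) {A : Type*} [Ring A]
    [Algebra ℂ A] (q : ℂ) (hq : orderOf q = if Odd m then m else 2 * m)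
    (a b c : A) (ham : a ^ m = 1) (hbm : b ^ m = 1) (hcm : c ^ m = 1)
    (hbc : b * c = q ^ 2 • (c * b)) (hab : a * b = q ^ 2 • (b * a)) :
    let R : A := ∑ j ∈ Finset.range m, q ^ (j ^ 2) • b ^ j
    R * c = q • (b ^ (m - 1) * (c * R)) ∧
    R * a = q⁻¹ • (a * (b * R)) := by
  intro R
  -- basic facts about q
  have h2m : q ^ (2 * m) = 1 := by
    apply orderOf_dvd_iff_pow_eq_one.mp
    rw [hq]
    split
    · exact dvd_mul_left m 2
    · exact dvd_refl _
  have hq0 : q ≠ 0 := by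
    intro h
    rw [h, zero_pow (by omega : 2 * m ≠ 0)] at h2m
    exact zero_ne_one h2m
  have hm2 : q ^ (m * m) = 1 := by
    apply orderOf_dvd_iff_pow_eq_one.mp
    rw [hq]
    split
    · exact dvd_mul_left m m
    · next h =>
      obtain ⟨k, hk⟩ := Nat.not_odd_iff_even.mp h
      exact ⟨k, by rw [hk]; ring⟩
  -- commutation lemmas
  have hbc' : ∀ j : ℕ, b ^ j * c = q ^ (2 * j) • (c * b ^ j) := by
    intro j
    induction j with
    | zero => simp
    | succ n ih =>
      calc b ^ (n + 1) * c = b ^ n * (b * c) := by rw [pow_succ, mul_assoc]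
        _ = b ^ n * (q ^ 2 • (c * b)) := by rw [hbc]
        _ = q ^ 2 • (b ^ n * c * b) := by rw [mul_smul_comm, mul_assoc]
        _ = q ^ 2 • (q ^ (2 * n) • (c * b ^ n) * b) := by rw [ih]
        _ = (q ^ 2 * q ^ (2 * n)) • (c * (b ^ n * b)) := by
              rw [smul_mul_assoc, smul_smul, mul_assoc]
        _ = q ^ (2 * (n + 1)) • (c * b ^ (n + 1)) := by
              rw [← pow_add, ← pow_succ]
              ring_nf
  have hab' : ∀ j : ℕ, a * b ^ j = q ^ (2 * j) • (b ^ j * a) := by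
    intro j
    induction j with
    | zero => simp
    | succ n ih =>
      calc a * b ^ (n + 1) = a * b ^ n * b := by rw [pow_succ, ← mul_assoc]
        _ = q ^ (2 * n) • (b ^ n * a) * b := by rw [ih]
        _ = q ^ (2 * n) • (b ^ n * (a * b)) := by
              rw [smul_mul_assoc, mul_assoc]
        _ = q ^ (2 * n) • (b ^ n * (q ^ 2 • (b * a))) := by rw [hab]
        _ = (q ^ (2 * n) * q ^ 2) • (b ^ n * b * a) := by
              rw [mul_smul_comm, smul_smul, mul_assoc]
        _ = q ^ (2 * (n + 1)) • (b ^ (n + 1) * a) := by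
              rw [← pow_add, ← pow_succ]
              ring_nf
  obtain ⟨n, rfl⟩ : ∃ n, m = n + 1 := ⟨m - 1, by omega⟩
  constructor
  · -- first identity
    have lhs_eq : R * c
        = ∑ j ∈ Finset.range (n + 1), q ^ (j ^ 2 + 2 * j) • (c * b ^ j) := by
      rw [show R = ∑ j ∈ Finset.range (n + 1), q ^ (j ^ 2) • b ^ j from rfl,
        Finset.sum_mul]
      refine Finset.sum_congr rfl fun j _ => ?_
      rw [smul_mul_assoc, hbc' j, smul_smul, ← pow_add]
    have rhs_eq : q • (b ^ (n + 1 - 1) * (c * R))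
        = ∑ j ∈ Finset.range (n + 1),
            q ^ (j ^ 2 + 2 * n + 1) • (c * b ^ (n + j)) := by
      rw [show R = ∑ j ∈ Finset.range (n + 1), q ^ (j ^ 2) • b ^ j from rfl,
        Finset.mul_sum, Finset.mul_sum, Finset.smul_sum]
      refine Finset.sum_congr rfl fun j _ => ?_
      have step : b ^ (n + 1 - 1) * (c * (q ^ (j ^ 2) • b ^ j))
          = q ^ (j ^ 2) • (b ^ n * c * b ^ j) := by
        rw [mul_smul_comm, mul_smul_comm]
        congr 1
        rw [mul_assoc]
        norm_num
      rw [step, hbc' n, smul_mul_assoc, smul_smul, smul_smul,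
        mul_assoc c, ← pow_add, ← pow_succ', ← pow_add]
      congr 2
      omega
    rw [lhs_eq, rhs_eq,
      Finset.sum_range_succ fun j => q ^ (j ^ 2 + 2 * j) • (c * b ^ j),
      Finset.sum_range_succ' fun j => q ^ (j ^ 2 + 2 * n + 1) • (c * b ^ (n + j))]
    congr 1
    · refine Finset.sum_congr rfl fun j _ => ?_
      have hb : b ^ (n + (j + 1)) = b ^ j := by
        rw [show n + (j + 1) = (n + 1) + j by ring, pow_add, hbm, one_mul]
      rw [hb]
      congr 1
      have e : q ^ ((j + 1) ^ 2 + 2 * n + 1)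
          = q ^ (j ^ 2 + 2 * j) * q ^ (2 * (n + 1)) := by
        rw [← pow_add]
        congr 1
        ring
      rw [e, h2m, mul_one]
    · rw [add_zero]
      congr 1
      have key : q ^ (n ^ 2 + 2 * n) * q = q ^ (0 ^ 2 + 2 * n + 1) * q := by
        rw [← pow_succ, ← pow_succ]
        have e1 : n ^ 2 + 2 * n + 1 = (n + 1) * (n + 1) := by ring
        have e2 : 0 ^ 2 + 2 * n + 1 + 1 = 2 * (n + 1) := by ring
        rw [e1, e2, hm2, h2m]
      exact mul_right_cancel₀ hq0 key
  · -- second identity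
    rw [eq_inv_smul_iff₀ hq0]
    have lhs_eq : q • (R * a)
        = ∑ j ∈ Finset.range (n + 1), q ^ (j ^ 2 + 1) • (b ^ j * a) := by
      rw [show R = ∑ j ∈ Finset.range (n + 1), q ^ (j ^ 2) • b ^ j from rfl,
        Finset.sum_mul, Finset.smul_sum]
      refine Finset.sum_congr rfl fun j _ => ?_
      rw [smul_mul_assoc, smul_smul, ← pow_succ']
    have rhs_eq : a * (b * R)
        = ∑ j ∈ Finset.range (n + 1),
            q ^ ((j + 1) ^ 2 + 1) • (b ^ (j + 1) * a) := by
      rw [show R = ∑ j ∈ Finset.range (n + 1), q ^ (j ^ 2) • b ^ j from rfl,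
        Finset.mul_sum, Finset.mul_sum]
      refine Finset.sum_congr rfl fun j _ => ?_
      rw [mul_smul_comm, mul_smul_comm, ← pow_succ', hab',
        smul_smul, ← pow_add]
      congr 2
      ring
    rw [lhs_eq, rhs_eq,
      Finset.sum_range_succ' fun j => q ^ (j ^ 2 + 1) • (b ^ j * a),
      Finset.sum_range_succ fun j => q ^ ((j + 1) ^ 2 + 1) • (b ^ (j + 1) * a)]
    congr 1
    have hb : b ^ (n + 1) * a = b ^ 0 * a := by rw [hbm, pow_zero]
    rw [hb]
    congr 1
    have e : q ^ ((n + 1) ^ 2 + 1) = q ^ ((n + 1) * (n + 1)) * q ^ (0 ^ 2 + 1) := by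
      rw [← pow_add]; congr 1; ring
    rw [e, hm2, one_mul]
end

section
/- In the algebra NES(m,n) generated by u_1,…,u_{n-1},t with relations u_i^m = 1 = t^n, u_iu_{i+1} = q^2 u_{i+1}u_i (1 ≤ i ≤ n−2), u_iu_j = u_ju_i for |i−j|≠1, and tu_it^{-1} = u_{i+1} (1 ≤ i ≤ n−2), define u_n := tu_{n-1}t^{-1}. Then: u_n^m = 1, tu_nt^{-1} = u_1, u_{n-1}u_n = q^2 u_nu_{n-1}, u_nu_1 = q^2 u_1u_n, and u_n commutes with u_j for 2 ≤ j ≤ n−2. -/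
/-- Lemma on `NES(m,n)`: in any ℂ-algebra with elements `u 1, …, u (n-1), t`
satisfying the defining relations of `NES(m,n)` (with `t⁻¹ = t^{n-1}` since
`t^n = 1`), the element `u_n := t u_{n-1} t⁻¹` satisfies `u_n^m = 1`,
`t u_n t⁻¹ = u_1`, `u_{n-1} u_n = q² u_n u_{n-1}`, `u_n u_1 = q² u_1 u_n`,
and `u_n` commutes with `u_j` for `2 ≤ j ≤ n-2`. -/
theorem NES_un_relations (m n : ℕ) (hm : 2 ≤ m) (hn : 4 ≤ n) {A : Type*}
    [Ring A] [Algebra ℂ A] (q : ℂ)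
    (hq : orderOf q = if Odd m then m else 2 * m)
    (u : ℕ → A) (t : A)
    (hum : ∀ i, 1 ≤ i → i ≤ n - 1 → u i ^ m = 1)
    (htn : t ^ n = 1)
    (huu : ∀ i, 1 ≤ i → i ≤ n - 2 → u i * u (i + 1) = q ^ 2 • (u (i + 1) * u i))
    (hcomm : ∀ i j, 1 ≤ i → i ≤ n - 1 → 1 ≤ j → j ≤ n - 1 →
      i + 1 ≠ j → j + 1 ≠ i → u i * u j = u j * u i)
    (htu : ∀ i, 1 ≤ i → i ≤ n - 2 → t * u i * t ^ (n - 1) = u (i + 1)) :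
    let un : A := t * u (n - 1) * t ^ (n - 1)
    un ^ m = 1 ∧
    t * un * t ^ (n - 1) = u 1 ∧
    u (n - 1) * un = q ^ 2 • (un * u (n - 1)) ∧
    un * u 1 = q ^ 2 • (u 1 * un) ∧
    (∀ j, 2 ≤ j → j ≤ n - 2 → un * u j = u j * un) := by
  intro un
  set s : A := t ^ (n - 1) with hs
  have hn1 : n - 1 + 1 = n := by omega
  have hst : s * t = 1 := by
    rw [hs, ← pow_succ, hn1, htn]
  have hts : t * s = 1 := by
    rw [hs, ← pow_succ', hn1, htn]
  have hst' : ∀ x : A, s * (t * x) = x := by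
    intro x; rw [← mul_assoc, hst, one_mul]
  have key : ∀ a b : A, (t * a * s) * (t * b * s) = t * (a * b) * s := by
    intro a b
    simp only [mul_assoc]
    rw [hst' (b * s)]
  have ksmul : ∀ (c : ℂ) (x : A), t * (c • x) * s = c • (t * x * s) := by
    intro c x; rw [mul_smul_comm, smul_mul_assoc]
  have hpow : ∀ (a : A) (k : ℕ), (t * a * s) ^ k = t * a ^ k * s := by
    intro a k
    induction k with
    | zero => simp [hts]
    | succ k ih => rw [pow_succ, ih, key, ← pow_succ]
  -- chain: u (k+1) = t^k * u 1 * s^k for k ≤ n-2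
  have hchain : ∀ k, k ≤ n - 2 → u (k + 1) = t ^ k * u 1 * s ^ k := by
    intro k
    induction k with
    | zero => simp
    | succ k ih =>
      intro hk
      have hk' : k ≤ n - 2 := by omega
      have h1 : 1 ≤ k + 1 := by omega
      rw [← htu (k + 1) h1 hk, ih hk', pow_succ' t, pow_succ s]
      simp only [mul_assoc]
  have hun1 : u (n - 1) = t ^ (n - 2) * u 1 * s ^ (n - 2) := by
    have := hchain (n - 2) le_rfl
    rwa [show n - 2 + 1 = n - 1 by omega] at this
  have htu2 : t * u (n - 2) * s = u (n - 1) := by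
    have := htu (n - 2) (by omega) le_rfl
    rwa [show n - 2 + 1 = n - 1 by omega] at this
  -- claim 1 : un ^ m = 1
  have c1 : (t * u (n - 1) * s) ^ m = 1 := by
    rw [hpow, hum (n - 1) (by omega) le_rfl, mul_one, hts]
  -- claim 2 : t * un * s = u 1
  have c2 : t * (t * u (n - 1) * s) * s = u 1 := by
    rw [hun1]
    have hsn : s ^ n = 1 := by
      rw [hs, ← pow_mul, mul_comm, pow_mul, htn, one_pow]
    have e1 : t ^ n = t * (t * t ^ (n - 2)) := by
      rw [← pow_succ', ← pow_succ', show n - 2 + 1 + 1 = n by omega]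
    have e2 : s ^ n = s ^ (n - 2) * s * s := by
      rw [← pow_succ, ← pow_succ, show n - 2 + 1 + 1 = n by omega]
    calc t * (t * (t ^ (n - 2) * u 1 * s ^ (n - 2)) * s) * s
        = t ^ n * u 1 * s ^ n := by rw [e1, e2]; simp only [mul_assoc]
      _ = u 1 := by rw [htn, hsn, one_mul, mul_one]
  -- claim 3
  have c3 : u (n - 1) * (t * u (n - 1) * s) =
      q ^ 2 • ((t * u (n - 1) * s) * u (n - 1)) := by
    have h := huu (n - 2) (by omega) (by omega)
    rw [show n - 2 + 1 = n - 1 by omega] at h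
    have h2 := congrArg (fun x => t * x * s) h
    rw [ksmul, ← key (u (n - 1)) (u (n - 2)), ← key (u (n - 2)) (u (n - 1)),
      htu2] at h2
    exact h2
  -- claim 4
  have c4 : (t * u (n - 1) * s) * u 1 = q ^ 2 • (u 1 * (t * u (n - 1) * s)) := by
    have h2 := congrArg (fun x => t * x * s) c3
    rw [ksmul, ← key ((t * u (n - 1) * s)) (u (n - 1)),
      ← key (u (n - 1)) ((t * u (n - 1) * s)), c2] at h2
    exact h2
  refine ⟨c1, c2, c3, c4, ?_⟩
  intro j hj2 hjn
  have htuj : t * u (j - 1) * s = u j := by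
    have := htu (j - 1) (by omega) (by omega)
    rwa [show j - 1 + 1 = j by omega] at this
  have h := hcomm (n - 1) (j - 1) (by omega) le_rfl (by omega) (by omega)
    (by omega) (by omega)
  have h2 := congrArg (fun x => t * x * s) h
  rw [← key (u (n - 1)) (u (j - 1)), ← key (u (j - 1)) (u (n - 1)), htuj] at h2
  exact h2
end

section
/- In the algebra Q_n generated by t, u_1,…,u_{n-1}, v_1,…,v_{n-1} with relations u_i^2 = v_i^2 = −1; [u_i,v_j] = −1 if |i−j|<2; [u_i,v_j] = 1 if |i−j|≥2; [u_i,u_j] = [v_i,v_j] = 1; t^n = 1; tu_it^{-1} = u_{i+1} and tv_it^{-1} = v_{i+1} for 1 ≤ i ≤ n−2, the elements u_n := tu_{n-1}t^{-1} and v_n := tv_{n-1}t^{-1} satisfy: u_n^2 = v_n^2 = −1, tu_nt^{-1} = u_1, tv_nt^{-1} = v_1, [u_n,v_1] = [u_n,v_{n-1}] = [u_n,v_n] = −1, and u_n, v_n commute with all u_j, v_j with 2 ≤ j ≤ n−2 in the appropriate sense (indices mod n). -/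
/-- Quaternionic algebra lemma: in any ℂ-algebra with elements
`t, u 1, …, u (n-1), v 1, …, v (n-1)` satisfying the defining relations of
`Q_n` — `u_i² = v_i² = -1`; `u_i v_j = -v_j u_i` if `|i-j| < 2` (group
commutator `[u_i,v_j] = -1`); `u_i v_j = v_j u_i` if `|i-j| ≥ 2`; the `u`'s
commute among themselves and the `v`'s commute among themselves; `t^n = 1`;
`t u_i t⁻¹ = u_{i+1}` and `t v_i t⁻¹ = v_{i+1}` for `1 ≤ i ≤ n-2` (with
`t⁻¹ = t^{n-1}`) — the elements `u_n := t u_{n-1} t⁻¹` and `v_n := t v_{n-1} t⁻¹`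
satisfy `u_n² = v_n² = -1`, `t u_n t⁻¹ = u_1`, `t v_n t⁻¹ = v_1`,
`[u_n,v_1] = [u_n,v_{n-1}] = [u_n,v_n] = -1` (anticommutation), and `u_n, v_n`
commute with all `u_j, v_j` for `2 ≤ j ≤ n-2`. -/
theorem quaternionic_un_vn_relations (n : ℕ) (hn : 4 ≤ n) {A : Type*}
    [Ring A] [Algebra ℂ A] (t : A) (u v : ℕ → A)
    (hu2 : ∀ i, 1 ≤ i → i ≤ n - 1 → u i ^ 2 = -1)
    (hv2 : ∀ i, 1 ≤ i → i ≤ n - 1 → v i ^ 2 = -1)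
    (huv1 : ∀ i j, 1 ≤ i → i ≤ n - 1 → 1 ≤ j → j ≤ n - 1 →
      i ≤ j + 1 → j ≤ i + 1 → u i * v j = -(v j * u i))
    (huv2 : ∀ i j, 1 ≤ i → i ≤ n - 1 → 1 ≤ j → j ≤ n - 1 →
      (i + 2 ≤ j ∨ j + 2 ≤ i) → u i * v j = v j * u i)
    (huu : ∀ i j, 1 ≤ i → i ≤ n - 1 → 1 ≤ j → j ≤ n - 1 → u i * u j = u j * u i)
    (hvv : ∀ i j, 1 ≤ i → i ≤ n - 1 → 1 ≤ j → j ≤ n - 1 → v i * v j = v j * v i)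
    (htn : t ^ n = 1)
    (htu : ∀ i, 1 ≤ i → i ≤ n - 2 → t * u i * t ^ (n - 1) = u (i + 1))
    (htv : ∀ i, 1 ≤ i → i ≤ n - 2 → t * v i * t ^ (n - 1) = v (i + 1)) :
    let un : A := t * u (n - 1) * t ^ (n - 1)
    let vn : A := t * v (n - 1) * t ^ (n - 1)
    un ^ 2 = -1 ∧ vn ^ 2 = -1 ∧
    t * un * t ^ (n - 1) = u 1 ∧ t * vn * t ^ (n - 1) = v 1 ∧
    un * v 1 = -(v 1 * un) ∧
    un * v (n - 1) = -(v (n - 1) * un) ∧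
    un * vn = -(vn * un) ∧
    (∀ j, 2 ≤ j → j ≤ n - 2 →
      un * u j = u j * un ∧ un * v j = v j * un ∧
      vn * u j = u j * vn ∧ vn * v j = v j * vn) := by
  intro un vn
  set s : A := t ^ (n - 1) with hs
  have hn1 : n - 1 + 1 = n := by omega
  have hst : s * t = 1 := by rw [hs, ← pow_succ, hn1, htn]
  have hts : t * s = 1 := by rw [hs, ← pow_succ', hn1, htn]
  have phi_mul : ∀ x y : A, (t * x * s) * (t * y * s) = t * (x * y) * s := by
    intro x y
    calc (t * x * s) * (t * y * s) = t * (x * ((s * t) * y)) * s := by noncomm_ring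
      _ = t * (x * y) * s := by rw [hst, one_mul]
  have psi_mul : ∀ x y : A, (s * x * t) * (s * y * t) = s * (x * y) * t := by
    intro x y
    calc (s * x * t) * (s * y * t) = s * (x * ((t * s) * y)) * t := by noncomm_ring
      _ = s * (x * y) * t := by rw [hts, one_mul]
  have phi_neg : ∀ x : A, t * (-x) * s = -(t * x * s) := by intro x; noncomm_ring
  have psi_neg : ∀ x : A, s * (-x) * t = -(s * x * t) := by intro x; noncomm_ring
  have phi_one : t * (1 : A) * s = 1 := by rw [mul_one, hts]
  -- s ^ (n-1) = t
  have hsn1 : s ^ (n - 1) = t := by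
    rw [hs, ← pow_mul]
    obtain ⟨m, rfl⟩ : ∃ m, n = m + 4 := ⟨n - 4, by omega⟩
    have he : (m + 4 - 1) * (m + 4 - 1) = (m + 4) * (m + 2) + 1 := by
      rw [show m + 4 - 1 = m + 3 by omega]
      ring
    rw [he, pow_succ, pow_mul, htn, one_pow, one_mul]
  -- lifting lemmas
  have liftu : ∀ k i, 1 ≤ i → i + k ≤ n - 1 → t ^ k * u i * s ^ k = u (i + k) := by
    intro k
    induction k with
    | zero => intro i _ _; simp
    | succ k ih =>
      intro i hi hik
      have h1 : t ^ k * u i * s ^ k = u (i + k) := ih i hi (by omega)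
      have h2 : t * u (i + k) * s = u (i + k + 1) := htu (i + k) (by omega) (by omega)
      calc t ^ (k + 1) * u i * s ^ (k + 1)
          = t * (t ^ k * u i * s ^ k) * s := by rw [pow_succ', pow_succ]; noncomm_ring
        _ = u (i + k + 1) := by rw [h1, h2]
  have liftv : ∀ k i, 1 ≤ i → i + k ≤ n - 1 → t ^ k * v i * s ^ k = v (i + k) := by
    intro k
    induction k with
    | zero => intro i _ _; simp
    | succ k ih =>
      intro i hi hik
      have h1 : t ^ k * v i * s ^ k = v (i + k) := ih i hi (by omega)
      have h2 : t * v (i + k) * s = v (i + k + 1) := htv (i + k) (by omega) (by omega)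
      calc t ^ (k + 1) * v i * s ^ (k + 1)
          = t * (t ^ k * v i * s ^ k) * s := by rw [pow_succ', pow_succ]; noncomm_ring
        _ = v (i + k + 1) := by rw [h1, h2]
  have hun1 : u (n - 1) = t ^ (n - 2) * u 1 * s ^ (n - 2) := by
    have := liftu (n - 2) 1 le_rfl (by omega)
    rw [show 1 + (n - 2) = n - 1 by omega] at this
    exact this.symm
  have hvn1 : v (n - 1) = t ^ (n - 2) * v 1 * s ^ (n - 2) := by
    have := liftv (n - 2) 1 le_rfl (by omega)
    rw [show 1 + (n - 2) = n - 1 by omega] at this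
    exact this.symm
  -- un = s * u 1 * t, vn = s * v 1 * t
  have hsplit : ∀ x : A, t * (t ^ (n - 2) * x * s ^ (n - 2)) * s = s * x * t := by
    intro x
    calc t * (t ^ (n - 2) * x * s ^ (n - 2)) * s
        = (t * t ^ (n - 2)) * x * (s ^ (n - 2) * s) := by noncomm_ring
      _ = s * x * t := by
          rw [← pow_succ', ← pow_succ, show n - 2 + 1 = n - 1 by omega, ← hs, hsn1]
  have hun : un = s * u 1 * t := by
    show t * u (n - 1) * s = _
    rw [hun1, hsplit]
  have hvn : vn = s * v 1 * t := by
    show t * v (n - 1) * s = _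
    rw [hvn1, hsplit]
  have hv1 : v 1 = s * v 2 * t := by
    have h := htv 1 le_rfl (by omega)
    rw [← h]
    calc v 1 = (s * t) * v 1 * (s * t) := by rw [hst, one_mul, mul_one]
      _ = s * (t * v 1 * s) * t := by noncomm_ring
  have huj : ∀ j, 2 ≤ j → j ≤ n - 1 → u j = t * u (j - 1) * s := by
    intro j h2 h3
    have := htu (j - 1) (by omega) (by omega)
    rw [show j - 1 + 1 = j by omega] at this
    exact this.symm
  have hvj : ∀ j, 2 ≤ j → j ≤ n - 1 → v j = t * v (j - 1) * s := by
    intro j h2 h3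
    have := htv (j - 1) (by omega) (by omega)
    rw [show j - 1 + 1 = j by omega] at this
    exact this.symm
  have hn1' : 1 ≤ n - 1 := by omega
  have hnn : n - 1 ≤ n - 1 := le_rfl
  refine ⟨?_, ?_, ?_, ?_, ?_, ?_, ?_, ?_⟩
  · show (t * u (n - 1) * s) ^ 2 = -1
    rw [sq, phi_mul, ← sq, hu2 (n - 1) hn1' hnn, phi_neg, phi_one]
  · show (t * v (n - 1) * s) ^ 2 = -1
    rw [sq, phi_mul, ← sq, hv2 (n - 1) hn1' hnn, phi_neg, phi_one]
  · rw [hun]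
    calc t * (s * u 1 * t) * s = (t * s) * u 1 * (t * s) := by noncomm_ring
      _ = u 1 := by rw [hts, one_mul, mul_one]
  · rw [hvn]
    calc t * (s * v 1 * t) * s = (t * s) * v 1 * (t * s) := by noncomm_ring
      _ = v 1 := by rw [hts, one_mul, mul_one]
  · rw [hun]
    conv_lhs => rw [hv1]
    rw [psi_mul, huv1 1 2 le_rfl hn1' (by omega) (by omega) (by omega) (by omega),
      psi_neg, ← psi_mul, ← hv1]
  · show (t * u (n - 1) * s) * v (n - 1) = -(v (n - 1) * (t * u (n - 1) * s))
    rw [hvj (n - 1) (by omega) le_rfl, phi_mul,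
      huv1 (n - 1) (n - 1 - 1) hn1' hnn (by omega) (by omega) (by omega) (by omega),
      phi_neg, ← phi_mul]
  · show (t * u (n - 1) * s) * vn = -(vn * (t * u (n - 1) * s))
    show _ = -((t * v (n - 1) * s) * _)
    rw [phi_mul, huv1 (n - 1) (n - 1) hn1' hnn hn1' hnn (by omega) (by omega),
      phi_neg, ← phi_mul]
  · intro j hj2 hjn
    have huj' := huj j hj2 (by omega)
    have hvj' := hvj j hj2 (by omega)
    have hb1 : 1 ≤ j - 1 := by omega
    have hb2 : j - 1 ≤ n - 1 := by omega
    refine ⟨?_, ?_, ?_, ?_⟩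
    · show (t * u (n - 1) * s) * u j = u j * (t * u (n - 1) * s)
      rw [huj', phi_mul, huu (n - 1) (j - 1) hn1' hnn hb1 hb2, ← phi_mul]
    · show (t * u (n - 1) * s) * v j = v j * (t * u (n - 1) * s)
      rw [hvj', phi_mul, huv2 (n - 1) (j - 1) hn1' hnn hb1 hb2 (Or.inr (by omega)),
        ← phi_mul]
    · show (t * v (n - 1) * s) * u j = u j * (t * v (n - 1) * s)
      rw [huj', phi_mul,
        (huv2 (j - 1) (n - 1) hb1 hb2 hn1' hnn (Or.inl (by omega))).symm, ← phi_mul]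
    · show (t * v (n - 1) * s) * v j = v j * (t * v (n - 1) * s)
      rw [hvj', phi_mul, hvv (n - 1) (j - 1) hn1' hnn hb1 hb2, ← phi_mul]
end
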